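/- arXiv:2206.12579 — 6 statements merged into one kernel-verified Lean document; each statement's English description precedes it below -/
import Mathlib

section
/- A real number α is irrational if and only if there exists a sequence of integers {q_n} such that {q_n·α}·({q_n·α} − 1) → 0 as n → ∞, where {x} denotes the fractional part of x, and q_n·α is never an integer. -/
/-!
The quantity `{x}({x} - 1)` is, up to sign, comparable with the distance from `x` to the nearest
integer: `{x}(1 - {x}) ≤ min({x}, 1 - {x}) = |x - round x|`. For irrational `α`, Dirichlet's
approximation theorem makes `|k α - j|` arbitrarily small, hence so is `{kα}(1 - {kα})`, and
`kα` is never an integer. For `α = a / b`, every non-integral `q α` lies in `(1 / b) ℤ`, so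
`{qα} = t / b` with `0 < t < b` and `{qα}(1 - {qα}) = t (b - t) / b² ≥ 1 / b²`.
-/

open Filter Int

section FloorRing

variable {α : Type*} [Field α] [LinearOrder α] [IsStrictOrderedRing α] [FloorRing α]

theorem abs_fract_mul_fract_sub_one (x : α) :
    |fract x * (fract x - 1)| = fract x * (1 - fract x) := by
  rw [abs_of_nonpos (mul_nonpos_of_nonneg_of_nonpos (fract_nonneg x)
    (sub_nonpos.mpr (fract_lt_one x).le))]
  ring

theorem fract_mul_one_sub_fract_le_abs_sub_intCast (x : α) (j : ℤ) :
    fract x * (1 - fract x) ≤ |x - j| :=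
  calc fract x * (1 - fract x) ≤ min (fract x) (1 - fract x) :=
        le_min (mul_le_of_le_one_right (fract_nonneg x) (sub_le_self _ (fract_nonneg x)))
          (mul_le_of_le_one_left (sub_nonneg.mpr (fract_lt_one x).le) (fract_lt_one x).le)
    _ = |x - round x| := (abs_sub_round_eq_min x).symm
    _ ≤ |x - j| := round_le x j

theorem one_div_sq_le_fract_mul_one_sub_fract {x : α} {b : ℕ} {m : ℤ} (hb : 0 < b)
    (hbx : b * x = m) (hx : fract x ≠ 0) :
    1 / (b : α) ^ 2 ≤ fract x * (1 - fract x) := by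
  set t : ℤ := m - b * ⌊x⌋
  have ht : (t : α) = b * fract x := by
    simp only [t, Int.cast_sub, Int.cast_mul, Int.cast_natCast, ← hbx, fract]
    ring
  have hbα : (0 : α) < b := Nat.cast_pos.mpr hb
  have ht_pos : 0 < t := by
    exact_mod_cast (ht ▸ mul_pos hbα ((fract_nonneg x).lt_of_ne' hx) : (0 : α) < t)
  have ht_lt : t < b := by
    exact_mod_cast (ht ▸ mul_lt_of_lt_one_right hbα (fract_lt_one x) : (t : α) < b)
  have hprod : (1 : α) ≤ t * (b - t) := by
    exact_mod_cast (one_le_mul_of_one_le_of_one_le (by omega) (by omega) : (1 : ℤ) ≤ t * (b - t))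
  rw [div_le_iff₀ (by positivity)]
  calc (1 : α) ≤ t * (b - t) := hprod
    _ = fract x * (1 - fract x) * b ^ 2 := by rw [ht]; ring

end FloorRing

theorem Real.exists_pos_int_fract_mul_one_sub_fract_le (ξ : ℝ) (n : ℕ) :
    ∃ k : ℤ, 0 < k ∧ fract (k * ξ) * (1 - fract (k * ξ)) ≤ 1 / (n + 1) := by
  obtain ⟨j, k, hk, -, hkj⟩ := Real.exists_int_int_abs_mul_sub_le ξ n.succ_pos
  refine ⟨k, hk, (fract_mul_one_sub_fract_le_abs_sub_intCast _ j).trans (hkj.trans ?_)⟩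
  gcongr
  linarith

theorem stmt_2 (α : ℝ) :
    Irrational α ↔
      ∃ q : ℕ → ℤ, (∀ n, ∀ m : ℤ, (q n : ℝ) * α ≠ m) ∧
        Filter.Tendsto
          (fun n => Int.fract ((q n : ℝ) * α) * (Int.fract ((q n : ℝ) * α) - 1))
          Filter.atTop (nhds 0) := by
  constructor
  · intro hα
    choose q hq_pos hq_le using Real.exists_pos_int_fract_mul_one_sub_fract_le α
    refine ⟨q, fun n m => (hα.intCast_mul (hq_pos n).ne').ne_int m,
      squeeze_zero_norm (fun n => ?_) tendsto_one_div_add_atTop_nhds_zero_nat⟩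
    rw [Real.norm_eq_abs, abs_fract_mul_fract_sub_one]
    exact hq_le n
  · rintro ⟨q, hq_int, hlim⟩ ⟨r, rfl⟩
    have hlb : ∀ n, 1 / (r.den : ℝ) ^ 2 ≤
        |fract ((q n : ℝ) * r) * (fract ((q n : ℝ) * r) - 1)| := fun n => by
      rw [abs_fract_mul_fract_sub_one]
      refine one_div_sq_le_fract_mul_one_sub_fract r.pos (m := q n * r.num) ?_
        (fract_ne_zero_iff.mpr fun ⟨m, hm⟩ => hq_int n m hm.symm)
      rw [mul_left_comm, ← Rat.cast_natCast, ← Rat.cast_mul, Rat.den_mul_eq_num]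
      push_cast
      ring
    obtain ⟨n, hn⟩ := (hlim.eventually (Metric.ball_mem_nhds 0
      (by positivity : (0 : ℝ) < 1 / (r.den : ℝ) ^ 2))).exists
    rw [Real.dist_eq, sub_zero] at hn
    exact (hlb n).not_gt hn
end

section
/- Let α be a real number and k ≥ 1 a natural number. If there exist integer sequences {a_{n,0}}, ..., {a_{n,k}} such that the quantity a_{n,k}·α^k + ... + a_{n,1}·α + a_{n,0} is nonzero for all n and tends to 0 as n → ∞, then α is irrational. -/
theorem stmt_3 (α : ℝ) (k : ℕ) (hk : 1 ≤ k) (a : ℕ → ℕ → ℤ)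
    (hne : ∀ n, (∑ j ∈ Finset.range (k + 1), (a n j : ℝ) * α ^ j) ≠ 0)
    (hlim : Filter.Tendsto
      (fun n => |∑ j ∈ Finset.range (k + 1), (a n j : ℝ) * α ^ j|)
      Filter.atTop (nhds 0)) :
    Irrational α := by
  rintro ⟨r, rfl⟩
  have hd0 : (0:ℝ) < (r.den : ℝ) := by exact_mod_cast r.pos
  have hdk : (0:ℝ) < (r.den : ℝ) ^ k := by positivity
  have key : ∀ n, ((r.den:ℝ)^k)⁻¹ ≤
      |∑ j ∈ Finset.range (k + 1), (a n j : ℝ) * (r:ℝ) ^ j| := by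
    intro n
    set M : ℤ := ∑ j ∈ Finset.range (k + 1), a n j * r.num ^ j * (r.den:ℤ) ^ (k - j)
    have hM : (M : ℝ) = (r.den:ℝ)^k * ∑ j ∈ Finset.range (k + 1), (a n j : ℝ) * (r:ℝ) ^ j := by
      rw [Finset.mul_sum]
      push_cast [M]
      refine Finset.sum_congr rfl fun j hj => ?_
      have hj' : j ≤ k := by
        have := Finset.mem_range.mp hj; omega
      have hr : (r:ℝ) = (r.num:ℝ) / (r.den:ℝ) := Rat.cast_def r
      rw [hr, div_pow]
      rw [show (r.den:ℝ)^k = (r.den:ℝ)^(k-j) * (r.den:ℝ)^j by rw [← pow_add]; congr 1; omega]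
      field_simp
    have hMne : M ≠ 0 := by
      intro h
      apply hne n
      have : (M : ℝ) = 0 := by rw [h]; simp
      rw [hM] at this
      rcases mul_eq_zero.mp this with h1 | h2
      · exact absurd h1 (ne_of_gt hdk)
      · exact h2
    have h1 : (1:ℝ) ≤ |(M:ℝ)| := by
      have : (1:ℤ) ≤ |M| := Int.one_le_abs hMne
      exact_mod_cast this
    rw [hM, abs_mul, abs_of_pos hdk] at h1
    rw [inv_le_iff_one_le_mul₀' hdk]
    exact h1
  have hev := (hlim.eventually (gt_mem_nhds (show (0:ℝ) < ((r.den:ℝ)^k)⁻¹ by positivity)))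
  obtain ⟨n, hn⟩ := hev.exists
  exact absurd (key n) (not_le.mpr hn)
end

section
/- Let p_n = Σ_{i=0}^{n} (−1)^i·n!/i! and q_n = n!. Then 0 < |q_n·(1/e) − p_n| < 1/n for all n ≥ 1; in particular this gives a nice rational approximation of 1/e. -/
theorem stmt_13 (p q : ℕ → ℤ)
    (hp : ∀ n, p n = ∑ i ∈ Finset.range (n + 1), (-1 : ℤ) ^ i * ((Nat.factorial n / Nat.factorial i : ℕ) : ℤ))
    (hq : ∀ n, q n = (Nat.factorial n : ℤ)) :
    ∀ n : ℕ, 1 ≤ n →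
      0 < |(q n : ℝ) * (Real.exp 1)⁻¹ - p n| ∧ |(q n : ℝ) * (Real.exp 1)⁻¹ - p n| < 1 / n := by
  intro n hn
  have hN : (1:ℝ) ≤ (n:ℝ) := by exact_mod_cast hn
  have hN0 : (0:ℝ) < n := by linarith
  have hb := Real.exp_bound (x := -1) (by norm_num) (n := n + 2) (by omega)
  rw [← Real.exp_neg]
  set S : ℝ := ∑ m ∈ Finset.range (n + 2), (-1:ℝ) ^ m / m.factorial with hS
  have hbS : |Real.exp (-1) - S| ≤ (n + 3) / ((n+2).factorial * (n + 2)) := by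
    have h1 : |(-1:ℝ)| ^ (n+2) = 1 := by simp
    rw [h1, one_mul] at hb
    convert hb using 2 <;> push_cast <;> ring_nf
  have hfacpos : (0:ℝ) < n.factorial := by exact_mod_cast n.factorial_pos
  have hpcast : (p n : ℝ) = (n.factorial : ℝ) * ∑ i ∈ Finset.range (n + 1), (-1:ℝ) ^ i / i.factorial := by
    rw [hp n]
    push_cast
    rw [Finset.mul_sum]
    apply Finset.sum_congr rfl
    intro i hi
    have hi' : i ≤ n := by simpa [Nat.lt_succ_iff] using Finset.mem_range.mp hi
    have hdvd : (i.factorial : ℤ) ∣ (n.factorial : ℤ) :=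
      Int.natCast_dvd_natCast.mpr (Nat.factorial_dvd_factorial hi')
    have hne : ((i.factorial : ℤ) : ℝ) ≠ 0 := by
      have := i.factorial_pos; push_cast; positivity
    rw [Int.cast_div hdvd hne]
    push_cast
    ring
  have hfac1 : ((n+1).factorial : ℝ) = (n.factorial : ℝ) * (n+1) := by
    rw [Nat.factorial_succ]; push_cast; ring
  have hfac2 : ((n+2).factorial : ℝ) = (n.factorial : ℝ) * (n+1) * (n+2) := by
    rw [Nat.factorial_succ, Nat.factorial_succ]; push_cast; ring
  have hkey : (q n : ℝ) * Real.exp (-1) - p n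
      = (n.factorial : ℝ) * (Real.exp (-1) - S) + (-1:ℝ)^(n+1) / (n+1) := by
    rw [hq n, hpcast, hS,
      Finset.sum_range_succ (f := fun m => (-1:ℝ) ^ m / m.factorial) (n := n+1), hfac1]
    push_cast
    have h1 : ((n:ℝ)+1) ≠ 0 := by positivity
    field_simp
    ring
  rw [hkey]
  have hterm : |(-1:ℝ)^(n+1) / (n+1)| = 1 / (n+1) := by
    rw [abs_div, abs_pow, abs_neg, abs_one, one_pow]
    simp [abs_of_pos (show (0:ℝ) < n+1 by linarith)]
  have hfr : |(n.factorial : ℝ) * (Real.exp (-1) - S)| ≤ (n+3) / ((n+1) * (n+2)^2) := by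
    rw [abs_mul, abs_of_pos hfacpos]
    calc (n.factorial : ℝ) * |Real.exp (-1) - S|
        ≤ (n.factorial : ℝ) * ((n + 3) / ((n+2).factorial * (n + 2))) :=
          mul_le_mul_of_nonneg_left hbS hfacpos.le
      _ = (n+3) / ((n+1) * (n+2)^2) := by
          rw [hfac2]; field_simp
  set y := (n.factorial : ℝ) * (Real.exp (-1) - S) with hy
  constructor
  · have hlow : 1/((n:ℝ)+1) - (n+3)/((n+1)*(n+2)^2) ≤ |y + (-1:ℝ)^(n+1) / (n+1)| := by
      have h2 := abs_sub_abs_le_abs_sub ((-1:ℝ)^(n+1) / (n+1)) (-y)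
      simp only [abs_neg, sub_neg_eq_add] at h2
      have h3 : |(-1:ℝ)^(n+1) / (n+1) + y| = |y + (-1:ℝ)^(n+1) / (n+1)| := by ring_nf
      rw [hterm, h3] at h2
      linarith
    have hpos : (0:ℝ) < 1/((n:ℝ)+1) - (n+3)/((n+1)*(n+2)^2) := by
      rw [sub_pos, div_lt_div_iff₀ (by positivity) (by positivity)]
      nlinarith
    linarith
  · have hup : |y + (-1:ℝ)^(n+1) / (n+1)| ≤ 1/((n:ℝ)+1) + (n+3)/((n+1)*(n+2)^2) := by
      calc |y + (-1:ℝ)^(n+1) / (n+1)| ≤ |y| + |(-1:ℝ)^(n+1) / (n+1)| := abs_add_le _ _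
        _ ≤ 1/((n:ℝ)+1) + (n+3)/((n+1)*(n+2)^2) := by rw [hterm]; linarith
    have hfin : 1/((n:ℝ)+1) + (n+3)/((n+1)*(n+2)^2) < 1/n := by
      rw [div_add_div _ _ (by positivity) (by positivity), div_lt_div_iff₀ (by positivity) hN0]
      nlinarith
    linarith
end

section
/- With p_n = Σ_{i=0}^{n} n!/i! and r_n = n!, one has r_n²·e² − p_n² ≥ n!/(n+1) → ∞, so {p_n²/r_n²} is not a nice rational approximation of e². -/
lemma aux_exp_ge (n : ℕ) :
    ∑ i ∈ Finset.range (n + 1), (1 : ℝ) / (Nat.factorial i) + 1 / (Nat.factorial (n + 1))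
      ≤ Real.exp 1 := by
  have h : Real.exp 1 = ∑' k : ℕ, (1 : ℝ) ^ k / (Nat.factorial k) := by
    rw [Real.exp_eq_exp_ℝ, NormedSpace.exp_eq_tsum_div]
  have hs : Summable (fun k : ℕ => (1 : ℝ) ^ k / (Nat.factorial k)) :=
    Real.summable_pow_div_factorial 1
  have h2 : ∑ i ∈ Finset.range (n + 2), (1 : ℝ) ^ i / (Nat.factorial i)
      ≤ ∑' k : ℕ, (1 : ℝ) ^ k / (Nat.factorial k) := by
    apply Summable.sum_le_tsum _ _ hs
    intro i _
    positivity
  rw [h]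
  refine le_trans (le_of_eq ?_) h2
  rw [Finset.sum_range_succ (f := fun i => (1 : ℝ) ^ i / (Nat.factorial i))]
  simp

theorem stmt_16 (p r : ℕ → ℤ)
    (hp : ∀ n, p n = ∑ i ∈ Finset.range (n + 1), (Nat.factorial n / Nat.factorial i : ℕ))
    (hr : ∀ n, r n = (Nat.factorial n : ℤ)) :
    (∀ n : ℕ, (r n : ℝ) ^ 2 * Real.exp 1 ^ 2 - (p n : ℝ) ^ 2 ≥ (Nat.factorial n : ℝ) / (n + 1)) ∧
    Filter.Tendsto (fun n => (r n : ℝ) ^ 2 * Real.exp 1 ^ 2 - (p n : ℝ) ^ 2)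
      Filter.atTop Filter.atTop := by
  have key : ∀ n : ℕ, (r n : ℝ) ^ 2 * Real.exp 1 ^ 2 - (p n : ℝ) ^ 2
      ≥ (Nat.factorial n : ℝ) / (n + 1) := by
    intro n
    have hF : (0 : ℝ) < (Nat.factorial n : ℝ) := by positivity
    have hn1 : (0 : ℝ) < (n : ℝ) + 1 := by positivity
    -- p n as a real sum
    have hpr : (p n : ℝ) = ∑ i ∈ Finset.range (n + 1),
        (Nat.factorial n : ℝ) / (Nat.factorial i : ℝ) := by
      rw [hp n, Int.cast_natCast, Nat.cast_sum]
      exact Finset.sum_congr rfl fun i hi =>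
        Nat.cast_div (Nat.factorial_dvd_factorial (Nat.lt_succ_iff.mp
          (Finset.mem_range.mp hi))) (by positivity)
    -- lower bound: n! * e ≥ p n + 1/(n+1)
    have h1 : (Nat.factorial n : ℝ) * Real.exp 1 ≥ (p n : ℝ) + 1 / ((n : ℝ) + 1) := by
      have := aux_exp_ge n
      have h2 : (Nat.factorial n : ℝ) *
          (∑ i ∈ Finset.range (n + 1), (1 : ℝ) / (Nat.factorial i)
            + 1 / (Nat.factorial (n + 1)))
          ≤ (Nat.factorial n : ℝ) * Real.exp 1 :=
        mul_le_mul_of_nonneg_left this hF.le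
      refine le_trans (le_of_eq ?_) h2
      rw [hpr, mul_add, Finset.mul_sum]
      congr 1
      · exact Finset.sum_congr rfl fun i _ => by ring
      · rw [Nat.factorial_succ]
        push_cast
        rw [mul_one_div, div_mul_eq_div_div_swap, div_self hF.ne']
    -- p n ≥ n!
    have hpF : (p n : ℝ) ≥ (Nat.factorial n : ℝ) := by
      rw [hpr]
      have : (Nat.factorial n : ℝ) / (Nat.factorial 0 : ℝ)
          ≤ ∑ i ∈ Finset.range (n + 1), (Nat.factorial n : ℝ) / (Nat.factorial i : ℝ) :=
        Finset.single_le_sum (f := fun i => (Nat.factorial n : ℝ) / (Nat.factorial i : ℝ))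
          (fun i _ => by positivity) (Finset.mem_range.mpr (Nat.succ_pos n))
      simpa using this
    rw [hr n]
    push_cast
    set F := (Nat.factorial n : ℝ)
    set P := ((p n : ℤ) : ℝ)
    set E := Real.exp 1
    have hinv : (0 : ℝ) < 1 / ((n : ℝ) + 1) := by positivity
    have hA : 1 / ((n : ℝ) + 1) ≤ F * E - P := by linarith
    have hB : 2 * F ≤ F * E + P := by linarith
    have hprod : (1 / ((n : ℝ) + 1)) * (2 * F) ≤ (F * E - P) * (F * E + P) :=
      mul_le_mul hA hB (by positivity) (by linarith)
    have heq : (F * E - P) * (F * E + P) = F ^ 2 * E ^ 2 - P ^ 2 := by ring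
    have h3 : (1 / ((n : ℝ) + 1)) * (2 * F) = 2 * (F / ((n : ℝ) + 1)) := by
      field_simp
    have h4 : (0 : ℝ) ≤ F / ((n : ℝ) + 1) := by positivity
    rw [ge_iff_le]
    nlinarith [hprod]
  constructor
  · exact key
  · apply Filter.tendsto_atTop_mono (fun n => key n)
    have hbound : ∀ n : ℕ, ((n : ℝ) - 1) / 2 ≤ (Nat.factorial n : ℝ) / (n + 1) := by
      intro n
      match n with
      | 0 => norm_num
      | 1 => norm_num [Nat.factorial]
      | (m + 2) =>
        have h1 : ((m + 2) * (m + 1) : ℕ) ≤ Nat.factorial (m + 2) := by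
          calc ((m + 2) * (m + 1) : ℕ) ≤ (m + 2) * Nat.factorial (m + 1) :=
                Nat.mul_le_mul_left _ (Nat.self_le_factorial (m + 1))
            _ = Nat.factorial (m + 2) := (Nat.factorial_succ (m + 1)).symm
        have h1' : ((m : ℝ) + 2) * ((m : ℝ) + 1) ≤ (Nat.factorial (m + 2) : ℝ) := by
          exact_mod_cast h1
        rw [div_le_div_iff₀ (by norm_num) (by positivity)]
        push_cast
        nlinarith [h1']
    apply Filter.tendsto_atTop_mono hbound
    apply Filter.Tendsto.atTop_div_const (by norm_num : (0:ℝ) < 2)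
    exact Filter.tendsto_atTop_add_const_right _ _ tendsto_natCast_atTop_atTop
end

section
/- Let p'_n = Σ_{i=0}^{2n} (2n)!/i! and q'_n = Σ_{i=0}^{2n} (−1)^i·(2n)!/i!. Then 0 < q'_n·e² − p'_n and |q'_n·e² − p'_n| → 0 as n → ∞; consequently e² is irrational. -/
/-!
Write `Sₙ` and `Aₙ` for the partial sums `∑_{i ≤ n} 1 / i!` and `∑_{i ≤ n} (-1)^i / i!`, so that
`p'ₙ = (2n)! S₂ₙ` and `q'ₙ = (2n)! A₂ₙ`. Since `e² e⁻¹ = e`,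
`q'ₙ e² - p'ₙ = (2n)! (e² (A₂ₙ - e⁻¹) + (e - S₂ₙ))`.
Both tails are nonnegative (the alternating one because an alternating series with decreasing terms
lies between consecutive partial sums), the second is positive, and both are `O(1 / (2n+1)!)`,
so the whole expression lies in `(0, (e² + 2) / (2n + 1)]`.
If `e² = a / b` were rational, `b (q'ₙ e² - p'ₙ)` would be a positive integer tending to `0`.
-/

open Finset Filter Real Nat
open scoped Topology

theorem irrational_of_int_mul_sub_int_tendsto_zero {x : ℝ} (a b : ℕ → ℤ)
    (hpos : ∀ n, 0 < a n * x - b n) (hlim : Tendsto (fun n ↦ a n * x - b n) atTop (𝓝 0)) :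
    Irrational x := by
  rintro ⟨r, rfl⟩
  have hden : (0 : ℝ) < r.den := mod_cast r.pos
  obtain ⟨n, hsmall⟩ := (hlim.eventually (gt_mem_nhds (inv_pos.2 hden))).exists
  -- clearing the denominator of `r` turns `a n * r - b n` into a positive integer
  have hclear : (r.den : ℝ) * (a n * r - b n) = ((a n * r.num - b n * r.den : ℤ) : ℝ) := by
    rw [Rat.cast_def]; push_cast; field_simp
  have hone : (1 : ℝ) ≤ r.den * (a n * r - b n) := by
    rw [hclear]
    exact_mod_cast (Int.cast_pos.1 (hclear ▸ mul_pos hden (hpos n)) : (0 : ℤ) < _)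
  have := mul_lt_mul_of_pos_left hsmall hden
  rw [mul_inv_cancel₀ hden.ne'] at this
  linarith

theorem antitone_inv_factorial : Antitone fun i : ℕ ↦ (i ! : ℝ)⁻¹ :=
  fun _ _ h ↦ inv_anti₀ (by positivity) (mod_cast factorial_le h)

theorem tendsto_sum_range_neg_one_pow_mul_inv_factorial :
    Tendsto (fun n ↦ ∑ i ∈ range n, (-1 : ℝ) ^ i * (i ! : ℝ)⁻¹) atTop (𝓝 (exp (-1))) := by
  have h := (NormedSpace.expSeries_div_hasSum_exp (-1 : ℝ)).tendsto_sum_nat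
  simpa only [← exp_eq_exp_ℝ, div_eq_mul_inv] using h

theorem sum_range_neg_one_pow_mul_inv_factorial_sub_exp_neg_one_mem_Icc (k : ℕ) :
    ∑ i ∈ range (2 * k + 1), (-1 : ℝ) ^ i * (i ! : ℝ)⁻¹ - exp (-1) ∈
      Set.Icc 0 ((2 * k + 1)! : ℝ)⁻¹ := by
  have hlim := tendsto_sum_range_neg_one_pow_mul_inv_factorial
  have hlow := antitone_inv_factorial.tendsto_le_alternating_series hlim k
  have hup := antitone_inv_factorial.alternating_series_le_tendsto hlim (k + 1)
  rw [show 2 * (k + 1) = 2 * k + 1 + 1 by ring, sum_range_succ,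
    (Odd.neg_one_pow ⟨k, rfl⟩ : (-1 : ℝ) ^ (2 * k + 1) = -1)] at hup
  exact ⟨by linarith, by linarith⟩

theorem inv_factorial_le_exp_one_sub_sum_range (n : ℕ) :
    (n ! : ℝ)⁻¹ ≤ exp 1 - ∑ i ∈ range n, (i ! : ℝ)⁻¹ := by
  have h := sum_le_exp_of_nonneg zero_le_one (n + 1)
  simp only [one_pow, one_div, sum_range_succ] at h
  linarith

theorem exp_one_sub_sum_range_le {n : ℕ} (hn : 0 < n) :
    exp 1 - ∑ i ∈ range n, (i ! : ℝ)⁻¹ ≤ 2 / n ! := by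
  have h := exp_bound' zero_le_one le_rfl hn
  simp only [one_pow, one_div, one_mul] at h
  have hn' : (1 : ℝ) ≤ n := mod_cast hn
  have : ((n : ℝ) + 1) / (n ! * n) ≤ 2 / n ! := by
    rw [div_le_div_iff₀ (by positivity) (by positivity)]
    nlinarith [(by positivity : (0 : ℝ) < n !)]
  linarith

theorem exp_one_sq_mul_sum_alternating_sub_sum_mem_Ioc (k : ℕ) :
    exp 1 ^ 2 * ∑ i ∈ range (2 * k + 1), (-1 : ℝ) ^ i * (i ! : ℝ)⁻¹ -
        ∑ i ∈ range (2 * k + 1), (i ! : ℝ)⁻¹ ∈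
      Set.Ioc 0 ((exp 1 ^ 2 + 2) / (2 * k + 1)!) := by
  set A := ∑ i ∈ range (2 * k + 1), (-1 : ℝ) ^ i * (i ! : ℝ)⁻¹
  set S := ∑ i ∈ range (2 * k + 1), (i ! : ℝ)⁻¹
  obtain ⟨hA₀, hA₁⟩ := sum_range_neg_one_pow_mul_inv_factorial_sub_exp_neg_one_mem_Icc k
  have hS₀ := inv_factorial_le_exp_one_sub_sum_range (2 * k + 1)
  have hS₁ := exp_one_sub_sum_range_le (2 * k).succ_pos
  have hsplit : exp 1 ^ 2 * A - S = exp 1 ^ 2 * (A - exp (-1)) + (exp 1 - S) := by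
    have : exp 1 ^ 2 * exp (-1) = exp 1 := by rw [sq, mul_assoc, ← exp_add]; norm_num
    linear_combination this
  rw [hsplit]
  refine ⟨?_, ?_⟩
  · have : (0 : ℝ) < ((2 * k + 1)! : ℝ)⁻¹ := by positivity
    nlinarith [mul_nonneg (sq_nonneg (exp 1)) hA₀]
  · calc exp 1 ^ 2 * (A - exp (-1)) + (exp 1 - S)
        ≤ exp 1 ^ 2 * ((2 * k + 1)! : ℝ)⁻¹ + 2 / (2 * k + 1)! := by gcongr
      _ = (exp 1 ^ 2 + 2) / (2 * k + 1)! := by ring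

theorem factorial_mul_exp_one_sq_mul_sum_alternating_sub_sum_mem_Ioc (k : ℕ) :
    ((2 * k)! : ℝ) * (exp 1 ^ 2 * ∑ i ∈ range (2 * k + 1), (-1 : ℝ) ^ i * (i ! : ℝ)⁻¹ -
        ∑ i ∈ range (2 * k + 1), (i ! : ℝ)⁻¹) ∈
      Set.Ioc 0 ((exp 1 ^ 2 + 2) / (2 * k + 1 : ℕ)) := by
  obtain ⟨hpos, hle⟩ := exp_one_sq_mul_sum_alternating_sub_sum_mem_Ioc k
  refine ⟨mul_pos (by positivity) hpos, ?_⟩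
  calc _ ≤ ((2 * k)! : ℝ) * ((exp 1 ^ 2 + 2) / (2 * k + 1)!) := by gcongr
    _ = (exp 1 ^ 2 + 2) / (2 * k + 1 : ℕ) := by rw [factorial_succ]; push_cast; field_simp

theorem cast_factorial_div_factorial {n i : ℕ} (h : i ≤ n) :
    ((n ! / i ! : ℕ) : ℝ) = n ! * (i ! : ℝ)⁻¹ := by
  rw [Nat.cast_div (factorial_dvd_factorial h) (by positivity), div_eq_mul_inv]

theorem cast_sum_factorial_div_factorial (n : ℕ) :
    ((∑ i ∈ range (n + 1), n ! / i ! : ℕ) : ℝ) = n ! * ∑ i ∈ range (n + 1), (i ! : ℝ)⁻¹ := by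
  rw [Nat.cast_sum, mul_sum]
  exact sum_congr rfl fun i hi ↦ cast_factorial_div_factorial (Nat.lt_succ_iff.1 (mem_range.1 hi))

theorem cast_sum_neg_one_pow_mul_factorial_div_factorial (n : ℕ) :
    ((∑ i ∈ range (n + 1), (-1 : ℤ) ^ i * ((n ! / i ! : ℕ) : ℤ) : ℤ) : ℝ) =
      n ! * ∑ i ∈ range (n + 1), (-1 : ℝ) ^ i * (i ! : ℝ)⁻¹ := by
  rw [Int.cast_sum, mul_sum]
  refine sum_congr rfl fun i hi ↦ ?_
  rw [Int.cast_mul, Int.cast_pow, Int.cast_neg, Int.cast_one, Int.cast_natCast,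
    cast_factorial_div_factorial (Nat.lt_succ_iff.1 (mem_range.1 hi))]
  ring

theorem stmt_17 (p' q' : ℕ → ℤ)
    (hp : ∀ n, p' n = ∑ i ∈ Finset.range (2 * n + 1), (Nat.factorial (2 * n) / Nat.factorial i : ℕ))
    (hq : ∀ n, q' n = ∑ i ∈ Finset.range (2 * n + 1),
      (-1 : ℤ) ^ i * ((Nat.factorial (2 * n) / Nat.factorial i : ℕ) : ℤ)) :
    (∀ n, 0 < (q' n : ℝ) * Real.exp 1 ^ 2 - p' n) ∧
    Filter.Tendsto (fun n => |(q' n : ℝ) * Real.exp 1 ^ 2 - p' n|) Filter.atTop (nhds 0) ∧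
    Irrational (Real.exp 1 ^ 2) := by
  have hmem : ∀ n, (q' n : ℝ) * exp 1 ^ 2 - p' n ∈ Set.Ioc 0 ((exp 1 ^ 2 + 2) / (2 * n + 1 : ℕ)) :=
    fun n ↦ by
      rw [hp, hq, Int.cast_natCast, cast_sum_factorial_div_factorial,
        cast_sum_neg_one_pow_mul_factorial_div_factorial]
      convert factorial_mul_exp_one_sq_mul_sum_alternating_sub_sum_mem_Ioc n using 1
      ring
  have hpos : ∀ n, 0 < (q' n : ℝ) * exp 1 ^ 2 - p' n := fun n ↦ (hmem n).1
  have hlim : Tendsto (fun n ↦ (q' n : ℝ) * exp 1 ^ 2 - p' n) atTop (𝓝 0) := by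
    have hden : Tendsto (fun n : ℕ ↦ 2 * n + 1) atTop atTop :=
      tendsto_atTop_mono (fun n ↦ by dsimp; omega) tendsto_id
    exact squeeze_zero (fun n ↦ (hpos n).le) (fun n ↦ (hmem n).2)
      ((tendsto_const_div_atTop_nhds_zero_nat _).comp hden)
  exact ⟨hpos, (tendsto_zero_iff_abs_tendsto_zero _).1 hlim,
    irrational_of_int_mul_sub_int_tendsto_zero q' p' hpos hlim⟩
end

section
/- For every nonzero rational number r, the number e^r is irrational; consequently, ln(r) is irrational for every positive rational r ≠ 1. -/
/-!
Hermite's argument. For a nonzero integer `m` and `p = X^k (1 - X)^k`, the polynomial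
`F = ∑_{i ≤ 2k} (-1)^i m^(2k-i) p^(i)` satisfies `m F + F' = m^(2k+1) p`, so
`e^m F(1) - F(0) = m^(2k+1) ∫₀¹ e^(mx) p(x) dx`. All derivatives of `p` at `0` and `1` are
divisible by `k!`. If `e^m = a/b`, then `b (e^m F(1) - F(0))` is a nonzero integer divisible by
`k!` and of size at most `b |m|^(2k+1) e^|m|`, which is impossible for large `k`.
Rational exponents reduce to integers via `(e^(a/b))^b = e^a`, and `ln r = s` means `e^s = r`.
-/

open Polynomial Nat Real

namespace Polynomial

variable {R : Type*} [CommRing R]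

theorem factorial_dvd_iterate_derivative_eval {p : R[X]} {a : R} {k : ℕ}
    (h : (X - C a) ^ k ∣ p) (i : ℕ) : (k ! : R) ∣ (derivative^[i] p).eval a := by
  obtain ⟨q, rfl⟩ := h
  have hcoeff : (derivative^[i] ((X - C a) ^ k * q)).eval a
      = i ! * ((X ^ k * taylor a q).coeff i) := by
    rw [← factorial_smul_hasseDeriv, LinearMap.smul_apply, eval_smul, ← taylor_coeff,
      taylor_mul, taylor_pow, map_sub, taylor_X, taylor_C, add_sub_cancel_right, nsmul_eq_mul]
  rw [hcoeff]
  rcases lt_or_ge i k with hik | hki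
  · simp [coeff_X_pow_mul', hik.not_ge]
  · exact (Nat.cast_dvd_cast (factorial_dvd_factorial hki)).mul_right _

/-- The paper's `F_{n,r}` for an integer `r = c` (with `n!·f_n` for `p`): when `deg p ≤ N`,
`exp (c x) F(x)` is a primitive of `c ^ (N + 1) exp (c x) p(x)`. -/
noncomputable def expPrimitive (c : R) (N : ℕ) (p : R[X]) : R[X] :=
  ∑ i ∈ Finset.range (N + 1), C ((-1) ^ i * c ^ (N - i)) * derivative^[i] p

theorem C_mul_expPrimitive_add_derivative {p : R[X]} {N : ℕ} (hp : p.natDegree ≤ N) (c : R) :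
    C c * expPrimitive c N p + derivative (expPrimitive c N p) = C (c ^ (N + 1)) * p := by
  set t : ℕ → R[X] := fun i => C ((-1) ^ i * c ^ (N + 1 - i)) * derivative^[i] p with ht
  have htelescope : C c * expPrimitive c N p + derivative (expPrimitive c N p)
      = ∑ i ∈ Finset.range (N + 1), (t i - t (i + 1)) := by
    rw [expPrimitive, Finset.mul_sum, derivative_sum, ← Finset.sum_add_distrib]
    refine Finset.sum_congr rfl fun i hi => ?_
    have hiN := Finset.mem_range.mp hi
    simp only [ht, show N + 1 - i = N - i + 1 by omega, show N + 1 - (i + 1) = N - i by omega,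
      derivative_C_mul, Function.iterate_succ_apply']
    simp only [C_mul, C_pow, C_neg, C_1]
    ring
  have hvanish : derivative^[N + 1] p = 0 := iterate_derivative_eq_zero (by omega)
  rw [htelescope, Finset.sum_range_sub']
  simp [ht, hvanish]

theorem factorial_dvd_eval_expPrimitive {p : R[X]} {a : R} {k : ℕ} (h : (X - C a) ^ k ∣ p)
    (c : R) (N : ℕ) : (k ! : R) ∣ (expPrimitive c N p).eval a := by
  rw [expPrimitive, eval_finsetSum]
  exact Finset.dvd_sum fun i _ => by
    rw [eval_mul]; exact (factorial_dvd_iterate_derivative_eval h i).mul_left _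

theorem map_expPrimitive {S : Type*} [CommRing S] (f : R →+* S) (c : R) (N : ℕ) (p : R[X]) :
    (expPrimitive c N p).map f = expPrimitive (f c) N (p.map f) := by
  simp [expPrimitive, Polynomial.map_sum, iterate_derivative_map]

end Polynomial

theorem integral_exp_mul_eval_C_mul_add_derivative (c : ℝ) (F : ℝ[X]) (a b : ℝ) :
    ∫ x in a..b, exp (c * x) * (C c * F + derivative F).eval x
      = exp (c * b) * F.eval b - exp (c * a) * F.eval a := by
  refine intervalIntegral.integral_eq_sub_of_hasDerivAt (f := fun x => exp (c * x) * F.eval x)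
    (fun x _ => ?_)
    (Continuous.intervalIntegrable (by fun_prop) _ _)
  have hexp : HasDerivAt (fun x => exp (c * x)) (exp (c * x) * c) x := by
    simpa using ((hasDerivAt_id x).const_mul c).exp
  refine (hexp.mul (F.hasDerivAt x)).congr_deriv ?_
  simp only [eval_add, eval_mul, eval_C]
  ring

theorem exp_mul_eval_one_expPrimitive_sub_eval_zero (c : ℝ) {p : ℝ[X]} {N : ℕ}
    (hp : p.natDegree ≤ N) :
    exp c * (expPrimitive c N p).eval 1 - (expPrimitive c N p).eval 0
      = c ^ (N + 1) * ∫ x in (0 : ℝ)..1, exp (c * x) * p.eval x := by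
  rw [← intervalIntegral.integral_const_mul]
  have h := integral_exp_mul_eval_C_mul_add_derivative c (expPrimitive c N p) 0 1
  rw [C_mul_expPrimitive_add_derivative hp] at h
  simpa [mul_left_comm] using h.symm

theorem integral_exp_mul_pow_mul_one_sub_pow_pos (c : ℝ) (k : ℕ) :
    0 < ∫ x in (0 : ℝ)..1, exp (c * x) * (x ^ k * (1 - x) ^ k) :=
  intervalIntegral.intervalIntegral_pos_of_pos_on (Continuous.intervalIntegrable (by fun_prop) _ _)
    (fun x hx => by have := hx.2; have := hx.1; positivity) one_pos

theorem integral_exp_mul_pow_mul_one_sub_pow_le (c : ℝ) (k : ℕ) :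
    ∫ x in (0 : ℝ)..1, exp (c * x) * (x ^ k * (1 - x) ^ k) ≤ exp |c| := by
  have hbound : ∀ x ∈ Set.Icc (0 : ℝ) 1, exp (c * x) * (x ^ k * (1 - x) ^ k) ≤ exp |c| := by
    rintro x ⟨hx0, hx1⟩
    have hpoly : x ^ k * (1 - x) ^ k ≤ 1 :=
      mul_le_one₀ (pow_le_one₀ hx0 hx1) (by positivity)
        (pow_le_one₀ (by linarith) (by linarith))
    have hexp : exp (c * x) ≤ exp |c| := exp_le_exp.mpr <| by
      calc c * x ≤ |c * x| := le_abs_self _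
        _ = |c| * x := by rw [abs_mul, abs_of_nonneg hx0]
        _ ≤ |c| := mul_le_of_le_one_right (abs_nonneg c) hx1
    calc exp (c * x) * (x ^ k * (1 - x) ^ k) ≤ exp |c| * 1 := by gcongr
      _ = exp |c| := mul_one _
  calc ∫ x in (0 : ℝ)..1, exp (c * x) * (x ^ k * (1 - x) ^ k)
      ≤ ∫ _ in (0 : ℝ)..1, exp |c| :=
        intervalIntegral.integral_mono_on zero_le_one
          (Continuous.intervalIntegrable (by fun_prop) _ _) intervalIntegrable_const hbound
    _ = exp |c| := by simp

theorem factorial_le_of_exp_intCast_eq_ratCast {m : ℤ} (hm : m ≠ 0) {q : ℚ}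
    (hq : (q : ℝ) = exp m) (k : ℕ) :
    (k ! : ℝ) ≤ q.den * |(m : ℝ)| * ((m : ℝ) ^ 2) ^ k * exp |(m : ℝ)| := by
  set p : ℤ[X] := X ^ k * (1 - X) ^ k
  set F := expPrimitive m (2 * k) p
  set J := ∫ x in (0 : ℝ)..1, exp (m * x) * (x ^ k * (1 - x) ^ k)
  set z : ℤ := q.num * F.eval 1 - q.den * F.eval 0
  have hz : (z : ℝ) = q.den * ((m : ℝ) ^ (2 * k + 1) * J) := by
    have hdeg : (p.map (Int.castRingHom ℝ)).natDegree ≤ 2 * k := by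
      simp only [p, Polynomial.map_mul, Polynomial.map_pow, Polynomial.map_sub,
        Polynomial.map_one, map_X]
      compute_degree
      omega
    have hFJ := exp_mul_eval_one_expPrimitive_sub_eval_zero (m : ℝ) hdeg
    rw [← eq_intCast (Int.castRingHom ℝ), ← map_expPrimitive, eval_one_map,
      eval_zero_map] at hFJ
    have hnum : (q.num : ℝ) = q.den * exp m := by
      rw [← hq]; exact_mod_cast (Rat.den_mul_eq_num q).symm
    simp only [z, Int.cast_sub, Int.cast_mul, Int.cast_natCast, hnum]
    simp only [p, eq_intCast, Polynomial.map_mul, Polynomial.map_pow, map_X, Polynomial.map_sub,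
      Polynomial.map_one, eval_mul, eval_pow, eval_X, eval_sub, eval_one] at hFJ
    linear_combination (q.den : ℝ) * hFJ
  have hz0 : z ≠ 0 := by
    have hJ := integral_exp_mul_pow_mul_one_sub_pow_pos (m : ℝ) k
    have : (z : ℝ) ≠ 0 := by rw [hz]; have := q.pos; positivity
    exact_mod_cast this
  have hdvd : (k ! : ℤ) ∣ z := by
    have h0 : (X - C 0) ^ k ∣ p := by simp [p]
    have h1 : (X - C 1) ^ k ∣ p :=
      (pow_dvd_pow_of_dvd (by rw [C_1, ← neg_sub X 1]; exact dvd_neg.mpr dvd_rfl) k).mul_left _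
    exact dvd_sub ((factorial_dvd_eval_expPrimitive h1 _ _).mul_left _)
      ((factorial_dvd_eval_expPrimitive h0 _ _).mul_left _)
  calc (k ! : ℝ) ≤ |(z : ℝ)| := by
        exact_mod_cast Int.le_of_dvd (abs_pos.mpr hz0) ((dvd_abs _ _).mpr hdvd)
    _ = q.den * (|(m : ℝ)| * ((m : ℝ) ^ 2) ^ k * J) := by
      rw [hz, abs_mul, abs_mul, abs_of_pos (integral_exp_mul_pow_mul_one_sub_pow_pos _ k), abs_pow,
        ← sq_abs (m : ℝ), Nat.abs_cast, ← pow_mul, pow_succ]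
      ring
    _ ≤ q.den * |(m : ℝ)| * ((m : ℝ) ^ 2) ^ k * exp |(m : ℝ)| := by
      rw [← mul_assoc, ← mul_assoc]
      gcongr
      exact integral_exp_mul_pow_mul_one_sub_pow_le _ k

theorem irrational_exp_intCast {m : ℤ} (hm : m ≠ 0) : Irrational (exp m) := by
  rintro ⟨q, hq⟩
  have hC : 0 < q.den * |(m : ℝ)| * exp |(m : ℝ)| := by have := q.pos; positivity
  obtain ⟨k, hk⟩ := ((FloorSemiring.tendsto_pow_div_factorial_atTop ((m : ℝ) ^ 2)).eventually
    (gt_mem_nhds (one_div_pos.mpr hC))).exists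
  rw [div_lt_div_iff₀ (by positivity) hC] at hk
  linarith [factorial_le_of_exp_intCast_eq_ratCast hm hq k]

theorem irrational_exp_ratCast {r : ℚ} (hr : r ≠ 0) : Irrational (exp r) := by
  refine Irrational.of_pow r.den ?_
  rw [← exp_nat_mul, ← Rat.cast_natCast, ← Rat.cast_mul, Rat.den_mul_eq_num, Rat.cast_intCast]
  exact irrational_exp_intCast (Rat.num_ne_zero.mpr hr)

theorem irrational_log_ratCast {r : ℚ} (hr : 0 < r) (h1 : r ≠ 1) : Irrational (log r) := by
  rintro ⟨s, hs⟩
  have hr' : (0 : ℝ) < r := by exact_mod_cast hr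
  have hs0 : s ≠ 0 := by
    rintro rfl
    exact log_ne_zero_of_pos_of_ne_one hr' (by exact_mod_cast h1) (by simpa using hs.symm)
  exact irrational_exp_ratCast hs0 ⟨r, by rw [hs, exp_log hr']⟩

theorem stmt_19 :
    (∀ r : ℚ, r ≠ 0 → Irrational (Real.exp r)) ∧
    (∀ r : ℚ, 0 < r → r ≠ 1 → Irrational (Real.log r)) :=
  ⟨fun _ => irrational_exp_ratCast, fun _ => irrational_log_ratCast⟩
end
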